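/- arXiv:math/0109147 — 2 statements merged into one kernel-verified Lean document; each statement's English description precedes it below -/
import Mathlib

section
/- Suppose α̃ = γ̃·0·(a)·β·0·0·⋯ where a > 0, β is a standard composition, and γ̃ is a generalized composition. If the generalized composition γ̃·(a-1)·β·0·⋯ reaches level e, then α̃ reaches level e. -/
/-!
Replacing the part `b` by the two parts `0, b + 1` leaves every prefix ending inside `γ̃`
unchanged, and turns a prefix ending after `γ̃` into a prefix one part longer whose sum is
also larger by one; so the excess `sum - length` of witnessing prefixes is preserved.
-/

/-- A generalized composition, given by a finite list of nonnegative parts (followed by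
zeros), reaches level `e` if some prefix of length `k ≥ 1` has sum at least `k + e`.
(`l.take k` is the whole of `l` for `k > l.length`, which correctly accounts for the
tail of zeros.) -/
def listReaches (l : List ℕ) (e : ℕ) : Prop :=
  ∃ k : ℕ, 0 < k ∧ k + e ≤ (l.take k).sum

theorem listReaches_append_zero_cons_succ (γ β : List ℕ) (b e : ℕ)
    (h : listReaches (γ ++ b :: β) e) : listReaches (γ ++ 0 :: (b + 1) :: β) e := by
  obtain ⟨k, hk, hsum⟩ := h
  by_cases hle : k ≤ γ.length
  · refine ⟨k, hk, ?_⟩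
    rwa [List.take_append_of_le_length hle] at hsum ⊢
  · obtain ⟨m, rfl⟩ : ∃ m, k = γ.length + (m + 1) := ⟨k - γ.length - 1, by omega⟩
    refine ⟨γ.length + (m + 2), by omega, ?_⟩
    rw [List.take_length_add_append] at hsum ⊢
    simp only [List.take_succ_cons, List.sum_append, List.sum_cons] at hsum ⊢
    omega

theorem reaches_of_insert_zero_general (e a : ℕ) (γ β : List ℕ) (ha : 0 < a)
    (h : listReaches (γ ++ (a - 1) :: β) e) :
    listReaches (γ ++ 0 :: a :: β) e := by
  simpa only [Nat.sub_one_add_one ha.ne'] using listReaches_append_zero_cons_succ γ β (a - 1) e h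

/-- Suppose `α̃ = γ̃·0·a·β·0·0·⋯` where `a > 0`, `β` is a standard composition and `γ̃`
is a generalized composition.  If `γ̃·(a-1)·β·0·⋯` reaches level `e`, then `α̃` reaches
level `e`. -/
theorem reaches_of_insert_zero (e a : ℕ) (γ β : List ℕ) (ha : 0 < a)
    (hβ : ∀ x ∈ β, 0 < x) (h : listReaches (γ ++ (a - 1) :: β) e) :
    listReaches (γ ++ 0 :: a :: β) e :=
  reaches_of_insert_zero_general e a γ β ha h
end

section
/- With G_α̃ defined as in the recursive construction, for every generalized composition α̃ = b·ρ̃ with b > 0 there exists a formal power series M_α̃ in the variables x₂,x₃,... (not involving x₁) such that G_α̃ = x₁·G_{(b-1)·ρ̃} + M_α̃(x₂,x₃,...). -/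
/-- Descent set of a composition (list of positive parts): partial sums. -/
def descents (l : List ℕ) : Finset ℕ :=
  (Finset.Ioo 0 l.length).image (fun k => (l.take k).sum)

/-- The fundamental quasi-symmetric function of degree `d` with descent set `D`
(variable `xᵢ` is `X (i-1)`). -/
noncomputable def Fqs (d : ℕ) (D : Finset ℕ) : MvPowerSeries ℕ ℚ :=
  fun e => (Nat.card {j : Fin d → ℕ // Monotone j ∧
    (∀ a b : Fin d, (a : ℕ) + 1 = (b : ℕ) → (a : ℕ) + 1 ∈ D → j a < j b) ∧
    ∀ s : ℕ, e s = (Finset.univ.filter fun i => j i = s).card} : ℚ)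

/-- Strip the trailing zeros of a generalized composition (finite list of parts). -/
def strip (l : List ℕ) : List ℕ := (l.reverse.dropWhile (· == 0)).reverse

/-- Fuel-driven version of the recursive definition of `G`.  After stripping trailing
zeros: if the result `ν` is a standard composition, `G = F_ν`; otherwise write
`ν = γ ++ [0] ++ τ` where `τ = a :: β` is the maximal zero-free (standard) suffix, and
`G_{γ·0·a·β} = G_{γ·a·β} - x_{ℓ(γ)+1} · G_{γ·(a-1)·β}` (note `x_{k}` is `X (k-1)`).
The fuel (an upper bound for the stripped length, which strictly decreases) makes the
recursion structural. -/
noncomputable def Gaux : ℕ → List ℕ → MvPowerSeries ℕ ℚ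
  | 0, l => Fqs (strip l).sum (descents (strip l))
  | (fuel + 1), l =>
      let l' := strip l
      if 0 ∈ l' then
        let r := l'.reverse
        let τ := (r.takeWhile (· != 0)).reverse
        let γ := ((r.dropWhile (· != 0)).tail).reverse
        Gaux fuel (γ ++ τ) -
          MvPowerSeries.X γ.length * Gaux fuel (γ ++ (τ.headI - 1) :: τ.tail)
      else Fqs l'.sum (descents l')

/-- The function `G_{α̃}` of a generalized composition `α̃` (finite list of parts,
extended by zeros), defined recursively from fundamental quasi-symmetric functions:
`G_{0,0,…} = 1`; `G_{ν·0·0⋯} = F_ν` for `ν` standard; and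
`G_{γ̃·0·a·β·0⋯} = G_{γ̃·a·β·0⋯} - x_{ℓ(γ̃)+1}·G_{γ̃·(a-1)·β·0⋯}` for `a > 0`, `β`
standard. -/
noncomputable def G (l : List ℕ) : MvPowerSeries ℕ ℚ := Gaux (strip l).length l

/-!
For a monomial `x^e` with `e₀ > 0` (`e₀` the exponent of `x₁`), the coefficient of `x^e` in
`G_{(b+1)·ρ}` equals that of `x^e / x₁` in `G_{b·ρ}`; hence
`M := G_{b·ρ} - x₁ · G_{(b-1)·ρ}` contains no monomial divisible by `x₁`.

For a standard composition this is a statement about `F`: a word counted by `F_{(b+1)·μ}` that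
uses the letter `1` starts with it, and deleting that letter is a bijection onto the words of
`F_{b·μ}`. For `b = 0` the descent after the first letter allows `x₁` only once, and the
recursion `G_{0·(a+1)·β} = G_{(a+1)·β} - x₁ · G_{a·β}` cancels the monomials with a higher power
of `x₁`. In general the first part is positive, so the last zero of the composition sits at a
position `k ≥ 2`: the defining recursion of `G` multiplies only by `x_k`, which commutes with
extracting `x₁`, and the identity follows by induction on the length.
-/

open MvPowerSeries

namespace List

theorem dropWhile_append_dropWhile {α : Type*} (p : α → Bool) (l m : List α) :
    (l.dropWhile p ++ m).dropWhile p = (l ++ m).dropWhile p := by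
  simp [dropWhile_append, dropWhile_idempotent]

theorem exists_eq_append_cons_not_mem {α : Type*} {x : α} {l : List α} (h : x ∈ l) :
    ∃ γ τ, l = γ ++ x :: τ ∧ x ∉ τ := by
  induction l with
  | nil => simp at h
  | cons y l ih =>
    by_cases hl : x ∈ l
    · obtain ⟨γ, τ, rfl, hτ⟩ := ih hl
      exact ⟨y :: γ, τ, rfl, hτ⟩
    · obtain rfl : x = y := by simpa [hl] using h
      exact ⟨[], l, rfl, hl⟩

end List

theorem strip_strip (l : List ℕ) : strip (strip l) = strip l :=
  List.rdropWhile_idempotent _ l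

theorem length_strip_le (l : List ℕ) : (strip l).length ≤ l.length :=
  (List.rdropWhile_prefix (p := (· == 0)) (l := l)).length_le

theorem strip_eq_self_iff {l : List ℕ} : strip l = l ↔ ∀ h : l ≠ [], l.getLast h ≠ 0 := by
  simp [strip, ← List.rdropWhile.eq_1, List.rdropWhile_eq_self_iff]

theorem strip_of_zero_not_mem {l : List ℕ} (h : 0 ∉ l) : strip l = l :=
  strip_eq_self_iff.2 fun hl h0 => h (h0 ▸ l.getLast_mem hl)

theorem strip_cons_strip (c : ℕ) (l : List ℕ) : strip (c :: strip l) = strip (c :: l) := by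
  simp only [strip, List.reverse_cons, List.reverse_reverse, List.dropWhile_append_dropWhile]

theorem exists_strip_eq_append_zero_succ_cons {l : List ℕ} (h : 0 ∈ strip l) :
    ∃ γ a β, strip l = γ ++ 0 :: (a + 1) :: β ∧ 0 ∉ β := by
  obtain ⟨γ, τ, hl, hτ⟩ := List.exists_eq_append_cons_not_mem h
  have hlast := strip_eq_self_iff.1 (strip_strip l)
  rcases τ with _ | ⟨_ | a, β⟩
  · exact absurd (by simp [hl]) (hlast (by simp [hl]))
  · simp at hτ
  · exact ⟨γ, a, β, hl, fun h0 => hτ (List.mem_cons_of_mem _ h0)⟩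

theorem reverse_takeWhile_reverse_append_zero_cons {γ τ : List ℕ} (hτ : 0 ∉ τ) :
    ((γ ++ 0 :: τ).reverse.takeWhile (· != 0)).reverse = τ ∧
      (((γ ++ 0 :: τ).reverse.dropWhile (· != 0)).tail).reverse = γ := by
  have hτ' : ∀ x ∈ τ.reverse, (x != 0) = true := by
    simpa using fun x (hx : x ∈ τ) (h0 : x = 0) => hτ (h0 ▸ hx)
  simp [List.takeWhile_append_of_pos hτ', List.dropWhile_append_of_pos hτ']

/-- The fundamental quasi-symmetric function `F_ν` of a composition `ν`. -/
noncomputable def Fcomp (ν : List ℕ) : MvPowerSeries ℕ ℚ := Fqs ν.sum (descents ν)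

theorem Gaux_congr {l m : List ℕ} (h : strip l = strip m) (f : ℕ) : Gaux f l = Gaux f m := by
  cases f <;> simp only [Gaux, h]

theorem Gaux_of_zero_not_mem {l : List ℕ} (h : 0 ∉ strip l) (f : ℕ) :
    Gaux f l = Fcomp (strip l) := by
  cases f <;> simp only [Gaux, h, if_false] <;> rfl

theorem Gaux_succ_of_strip_eq {l γ β : List ℕ} {a : ℕ} (hl : strip l = γ ++ 0 :: (a + 1) :: β)
    (hβ : 0 ∉ β) (f : ℕ) :
    Gaux (f + 1) l = Gaux f (γ ++ (a + 1) :: β) - X γ.length * Gaux f (γ ++ a :: β) := by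
  obtain ⟨hτ, hγ⟩ := reverse_takeWhile_reverse_append_zero_cons (γ := γ)
    (by simpa [eq_comm] using hβ : 0 ∉ (a + 1) :: β)
  simp only [Gaux, hl, hτ, hγ, List.mem_append, List.mem_cons, true_or, or_true, if_true,
    List.headI_cons, List.tail_cons, Nat.add_sub_cancel]

theorem Gaux_succ {f : ℕ} {l : List ℕ} (h : (strip l).length ≤ f) : Gaux (f + 1) l = Gaux f l := by
  induction f generalizing l with
  | zero =>
    have hl : strip l = [] := List.eq_nil_of_length_eq_zero (Nat.le_zero.1 h)
    rw [Gaux_of_zero_not_mem (by simp [hl]), Gaux_of_zero_not_mem (by simp [hl])]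
  | succ f ih =>
    by_cases h0 : 0 ∈ strip l
    · obtain ⟨γ, a, β, hl, hβ⟩ := exists_strip_eq_append_zero_succ_cons h0
      have hlen := congrArg List.length hl
      simp only [List.length_append, List.length_cons] at hlen
      rw [Gaux_succ_of_strip_eq hl hβ, Gaux_succ_of_strip_eq hl hβ,
        ih ((length_strip_le _).trans (by simp; omega)),
        ih ((length_strip_le _).trans (by simp; omega))]
    · rw [Gaux_of_zero_not_mem h0, Gaux_of_zero_not_mem h0]

theorem Gaux_eq_G {f : ℕ} {l : List ℕ} (h : (strip l).length ≤ f) : Gaux f l = G l := by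
  induction f, h using Nat.le_induction with
  | base => rfl
  | succ f hf ih => rw [Gaux_succ hf, ih]

theorem G_congr {l m : List ℕ} (h : strip l = strip m) : G l = G m := by
  rw [G, G, h, Gaux_congr h]

theorem G_of_zero_not_mem {ν : List ℕ} (h : 0 ∉ ν) : G ν = Fcomp ν := by
  rw [G, Gaux_of_zero_not_mem (by rwa [strip_of_zero_not_mem h]), strip_of_zero_not_mem h]

theorem G_append_zero_succ_cons (γ : List ℕ) (a : ℕ) {β : List ℕ} (hβ : 0 ∉ β) :
    G (γ ++ 0 :: (a + 1) :: β) = G (γ ++ (a + 1) :: β) - X γ.length * G (γ ++ a :: β) := by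
  have hstrip : strip (γ ++ 0 :: (a + 1) :: β) = γ ++ 0 :: (a + 1) :: β :=
    strip_eq_self_iff.2 fun hl h0 => by
      rw [List.getLast_append_of_ne_nil _ (by simp), List.getLast_cons (by simp)] at h0
      exact (by simpa [eq_comm] using hβ : 0 ∉ (a + 1) :: β) (h0 ▸ List.getLast_mem _)
  rw [G, hstrip, List.length_append, List.length_cons, List.length_cons, Nat.add_succ,
    Gaux_succ_of_strip_eq hstrip hβ, Gaux_eq_G, Gaux_eq_G]
  all_goals exact (length_strip_le _).trans (by simp)

def IsFqsWord (D : Finset ℕ) (e : ℕ →₀ ℕ) {d : ℕ} (j : Fin d → ℕ) : Prop :=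
  Monotone j ∧ (∀ a b : Fin d, (a : ℕ) + 1 = (b : ℕ) → (a : ℕ) + 1 ∈ D → j a < j b) ∧
    ∀ s : ℕ, e s = (Finset.univ.filter fun i => j i = s).card

theorem coeff_Fqs (d : ℕ) (D : Finset ℕ) (e : ℕ →₀ ℕ) :
    coeff e (Fqs d D) = Nat.card {j : Fin d → ℕ // IsFqsWord D e j} :=
  rfl

theorem card_filter_cons_eq {d : ℕ} (x : ℕ) (t : Fin d → ℕ) (s : ℕ) :
    (Finset.univ.filter fun i => (Fin.cons x t : Fin (d + 1) → ℕ) i = s).card =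
      (if x = s then 1 else 0) + (Finset.univ.filter fun i => t i = s).card := by
  simp only [Finset.card_filter, Fin.sum_univ_succ, Fin.cons_zero, Fin.cons_succ]

section IsFqsWord

variable {D D' : Finset ℕ} {e : ℕ →₀ ℕ} {d : ℕ}

theorem IsFqsWord.apply_zero {j : Fin (d + 1) → ℕ} (hj : IsFqsWord D e j) (he : 0 < e 0) :
    j 0 = 0 := by
  obtain ⟨i, hi⟩ : (Finset.univ.filter fun i => j i = 0).Nonempty := by
    rw [← Finset.card_pos, ← hj.2.2 0]
    exact he
  exact Nat.eq_zero_of_le_zero ((hj.1 (Fin.zero_le i)).trans (Finset.mem_filter.1 hi).2.le)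

theorem IsFqsWord.tail (hD : ∀ p, p + 2 ∈ D ↔ p + 1 ∈ D') {j : Fin (d + 1) → ℕ}
    (hj : IsFqsWord D e j) (he : 0 < e 0) : IsFqsWord D' (e - Finsupp.single 0 1) (Fin.tail j) := by
  have hj0 := hj.apply_zero he
  obtain ⟨hmono, hdes, hcont⟩ := hj
  refine ⟨hmono.comp Fin.strictMono_succ.monotone, fun a b hab ha => ?_, fun s => ?_⟩
  · exact hdes a.succ b.succ (by simp [hab]) ((hD a).2 ha)
  · have := hcont s
    rw [← Fin.cons_self_tail j, card_filter_cons_eq, hj0] at this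
    rw [Finsupp.tsub_apply, this]
    rcases eq_or_ne s 0 with rfl | hs
    · simp [Fin.tail]
    · simp [Fin.tail, hs, hs.symm]

theorem IsFqsWord.cons_zero (hD : ∀ p, p + 2 ∈ D ↔ p + 1 ∈ D') {j : Fin d → ℕ}
    (hj : IsFqsWord D' (e - Finsupp.single 0 1) j) (he : 0 < e 0) (h1 : 1 ∈ D → e 0 = 1) :
    IsFqsWord D e (Fin.cons 0 j : Fin (d + 1) → ℕ) := by
  obtain ⟨hmono, hdes, hcont⟩ := hj
  refine ⟨fun a b hab => ?_, fun a b hab ha => ?_, fun s => ?_⟩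
  · induction a using Fin.cases with
    | zero => simp
    | succ a =>
      induction b using Fin.cases with
      | zero => exact absurd hab (by simp)
      | succ b => simpa using hmono (Fin.succ_le_succ_iff.1 hab)
  · induction a using Fin.cases with
    | zero =>
      obtain ⟨b, rfl⟩ := Fin.eq_succ_of_ne_zero (show b ≠ 0 by rintro rfl; simp at hab)
      have hcard := hcont 0
      simp only [Finsupp.tsub_apply, h1 (by simpa using ha), Finsupp.single_eq_same,
        Nat.sub_self] at hcard
      have hb := Finset.filter_eq_empty_iff.1 (Finset.card_eq_zero.1 hcard.symm) (Finset.mem_univ b)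
      simpa [Nat.pos_iff_ne_zero] using hb
    | succ a =>
      obtain ⟨b, rfl⟩ := Fin.eq_succ_of_ne_zero (show b ≠ 0 by rintro rfl; simp at hab)
      simpa using hdes a b (by simpa using hab) ((hD a).1 (by simpa using ha))
  · rw [card_filter_cons_eq, ← hcont s, Finsupp.tsub_apply]
    rcases eq_or_ne s 0 with rfl | hs
    · simp; omega
    · simp [hs, hs.symm]

theorem IsFqsWord.isEmpty (h1 : 1 ∈ D) (he : 2 ≤ e 0) :
    IsEmpty {j : Fin (d + 1) → ℕ // IsFqsWord D e j} := by
  refine ⟨fun ⟨j, hj⟩ => ?_⟩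
  have hj0 := hj.apply_zero (by omega)
  obtain ⟨hmono, hdes, hcont⟩ := hj
  have hcard := hcont 0
  rw [← Fin.cons_self_tail j, card_filter_cons_eq, hj0, if_pos rfl] at hcard
  obtain ⟨i, hi⟩ : (Finset.univ.filter fun i => Fin.tail j i = 0).Nonempty := by
    rw [← Finset.card_pos]
    omega
  have hfirst : j 0 < j (⟨0, i.pos⟩ : Fin d).succ := hdes _ _ rfl (by simpa using h1)
  have hmono' : j (⟨0, i.pos⟩ : Fin d).succ ≤ j i.succ :=
    hmono (Fin.succ_le_succ_iff.2 (Fin.mk_le_of_le_val (Nat.zero_le _)))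
  have hi0 : j i.succ = 0 := (Finset.mem_filter.1 hi).2
  omega

theorem coeff_Fqs_succ (hD : ∀ p, p + 2 ∈ D ↔ p + 1 ∈ D') (he : 0 < e 0)
    (h1 : 1 ∈ D → e 0 = 1) :
    coeff e (Fqs (d + 1) D) = coeff (e - Finsupp.single 0 1) (Fqs d D') := by
  rw [coeff_Fqs, coeff_Fqs, Nat.card_congr
    { toFun := fun j => ⟨Fin.tail j.1, j.2.tail hD he⟩
      invFun := fun j => ⟨Fin.cons 0 j.1, j.2.cons_zero hD he h1⟩
      left_inv := fun j => Subtype.ext <| by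
        conv_rhs => rw [← Fin.cons_self_tail j.1, j.2.apply_zero he]
      right_inv := fun j => Subtype.ext (Fin.tail_cons (α := fun _ => ℕ) 0 j.1) }]

theorem coeff_Fqs_succ_eq_zero (h1 : 1 ∈ D) (he : 2 ≤ e 0) : coeff e (Fqs (d + 1) D) = 0 := by
  have := IsFqsWord.isEmpty (d := d) h1 he
  rw [coeff_Fqs, Nat.card_of_isEmpty, Nat.cast_zero]

end IsFqsWord

theorem mem_descents {μ : List ℕ} {q : ℕ} :
    q ∈ descents μ ↔ ∃ k, 0 < k ∧ k < μ.length ∧ (μ.take k).sum = q := by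
  simp [descents, and_assoc]

theorem mem_descents_cons {c : ℕ} {μ : List ℕ} {q : ℕ} :
    q ∈ descents (c :: μ) ↔ ∃ k < μ.length, c + (μ.take k).sum = q := by
  rw [mem_descents]
  constructor
  · rintro ⟨_ | k, hk0, hkμ, rfl⟩
    · simp at hk0
    · exact ⟨k, by simpa using hkμ, by simp⟩
  · rintro ⟨k, hk, rfl⟩
    exact ⟨k + 1, k.succ_pos, by simpa using hk, by simp⟩

theorem coeff_Fcomp_succ_cons {c : ℕ} (hc : c ≠ 0) (μ : List ℕ) {e : ℕ →₀ ℕ} (he : 0 < e 0) :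
    coeff e (Fcomp ((c + 1) :: μ)) = coeff (e - Finsupp.single 0 1) (Fcomp (c :: μ)) := by
  rw [Fcomp, Fcomp, List.sum_cons, List.sum_cons, Nat.add_right_comm]
  refine coeff_Fqs_succ (fun p => ?_) he fun h1 => ?_
  · simp only [mem_descents_cons]
    exact exists_congr fun k => and_congr_right fun _ => by omega
  · obtain ⟨k, -, hk⟩ := mem_descents_cons.1 h1
    omega

theorem coeff_Fcomp_one_cons (μ : List ℕ) {e : ℕ →₀ ℕ} (he : 0 < e 0) (h1 : μ ≠ [] → e 0 = 1) :
    coeff e (Fcomp (1 :: μ)) = coeff (e - Finsupp.single 0 1) (Fcomp μ) := by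
  rw [Fcomp, Fcomp, List.sum_cons, add_comm]
  refine coeff_Fqs_succ (fun p => ?_) he fun h => h1 ?_
  · rw [mem_descents_cons, mem_descents]
    constructor
    · rintro ⟨_ | k, hk, hsum⟩
      · simp at hsum
      · exact ⟨k + 1, k.succ_pos, hk, by omega⟩
    · rintro ⟨k, -, hk, hsum⟩
      exact ⟨k, hk, by omega⟩
  · rintro rfl
    simp [descents] at h

theorem coeff_Fcomp_one_cons_eq_zero {μ : List ℕ} (hμ : μ ≠ []) {e : ℕ →₀ ℕ} (he : 2 ≤ e 0) :
    coeff e (Fcomp (1 :: μ)) = 0 := by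
  rw [Fcomp, List.sum_cons, add_comm]
  exact coeff_Fqs_succ_eq_zero (mem_descents_cons.2 ⟨0, List.length_pos_iff.2 hμ, by simp⟩) he

theorem MvPowerSeries.coeff_X_mul {σ R : Type*} [DecidableEq σ] [CommSemiring R] (s : σ)
    (f : MvPowerSeries σ R) (e : σ →₀ ℕ) :
    coeff e (X s * f) = if 0 < e s then coeff (e - Finsupp.single s 1) f else 0 := by
  rw [X, coeff_monomial_mul, one_mul]
  exact if_congr Finsupp.single_le_iff rfl rfl

theorem G_cons_strip (c : ℕ) (l : List ℕ) : G (c :: strip l) = G (c :: l) :=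
  G_congr (strip_cons_strip c l)

theorem coeff_G_succ_cons_of_zero_not_mem :
    ∀ (b : ℕ) {μ : List ℕ}, 0 ∉ μ → ∀ {e : ℕ →₀ ℕ}, 0 < e 0 →
      coeff e (G ((b + 1) :: μ)) = coeff (e - Finsupp.single 0 1) (G (b :: μ))
  | b + 1, μ, hμ, e, he => by
    rw [G_of_zero_not_mem (by simpa using hμ), G_of_zero_not_mem (by simpa using hμ)]
    exact coeff_Fcomp_succ_cons b.succ_ne_zero μ he
  | 0, [], _, e, he => by
    rw [G_of_zero_not_mem (by simp), G_congr (l := [0]) (m := []) rfl, G_of_zero_not_mem (by simp)]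
    exact coeff_Fcomp_one_cons [] he (absurd rfl)
  | 0, 0 :: _, hμ, _, _ => absurd List.mem_cons_self hμ
  | 0, (a + 1) :: β, hμ, e, he => by
    have hβ : 0 ∉ β := fun h => hμ (List.mem_cons_of_mem _ h)
    rw [G_of_zero_not_mem (by simpa using hμ), ← List.nil_append (0 :: _),
      G_append_zero_succ_cons [] a hβ, map_sub, coeff_X_mul]
    simp only [List.nil_append, List.length_nil]
    rw [G_of_zero_not_mem hμ]
    rcases (show e 0 = 1 ∨ 2 ≤ e 0 by omega) with he1 | he2
    · rw [if_neg (by simp [he1]), sub_zero]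
      exact coeff_Fcomp_one_cons _ he fun _ => he1
    · rw [if_pos (by simp; omega), ← G_of_zero_not_mem hμ,
        coeff_G_succ_cons_of_zero_not_mem a hβ (by simp; omega), sub_self]
      exact coeff_Fcomp_one_cons_eq_zero (List.cons_ne_nil _ _) he2

theorem coeff_G_succ_cons (b : ℕ) (ρ : List ℕ) {e : ℕ →₀ ℕ} (he : 0 < e 0) :
    coeff e (G ((b + 1) :: ρ)) = coeff (e - Finsupp.single 0 1) (G (b :: ρ)) := by
  rw [← G_cons_strip, ← G_cons_strip b]
  by_cases h0 : 0 ∈ strip ρ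
  · obtain ⟨γ, a, β, hρ, hβ⟩ := exists_strip_eq_append_zero_succ_cons h0
    have hlen : γ.length + β.length + 2 ≤ ρ.length := by
      simpa [hρ, Nat.add_assoc] using length_strip_le ρ
    -- `hlt₁` and `hlt₂` discharge the termination obligations of the two recursive calls.
    have hlt₁ : (γ ++ (a + 1) :: β).length < ρ.length := by simp; omega
    have hlt₂ : (γ ++ a :: β).length < ρ.length := by simp; omega
    have hk : (e - Finsupp.single 0 1 : ℕ →₀ ℕ) (γ.length + 1) = e (γ.length + 1) := by simp
    rw [hρ, ← List.cons_append, ← List.cons_append, G_append_zero_succ_cons _ _ hβ,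
      G_append_zero_succ_cons _ _ hβ, map_sub, map_sub, coeff_X_mul, coeff_X_mul]
    simp only [List.cons_append, List.length_cons, hk]
    rw [coeff_G_succ_cons b (γ ++ (a + 1) :: β) he]
    split_ifs
    · rw [coeff_G_succ_cons b (γ ++ a :: β) (by simpa using he), tsub_right_comm]
    · rfl
  · exact coeff_G_succ_cons_of_zero_not_mem b h0 he
termination_by ρ.length

/-- For every generalized composition `b·ρ̃` with `b > 0`, there is a formal power
series `M` not involving the variable `x₁` such that
`G_{b·ρ̃} = x₁ · G_{(b-1)·ρ̃} + M(x₂,x₃,…)`. -/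
theorem G_pos_cons (b : ℕ) (ρ : List ℕ) (hb : 0 < b) :
    ∃ M : MvPowerSeries ℕ ℚ,
      (∀ e : ℕ →₀ ℕ, e 0 ≠ 0 → MvPowerSeries.coeff e M = 0) ∧
      G (b :: ρ) = MvPowerSeries.X 0 * G ((b - 1) :: ρ) + M := by
  obtain ⟨c, rfl⟩ : ∃ c, b = c + 1 := ⟨b - 1, by omega⟩
  refine ⟨G ((c + 1) :: ρ) - X 0 * G ((c + 1 - 1) :: ρ), fun e he => ?_, by ring⟩
  rw [map_sub, coeff_X_mul, if_pos (Nat.pos_of_ne_zero he), Nat.add_sub_cancel,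
    coeff_G_succ_cons c ρ (Nat.pos_of_ne_zero he), sub_self]
end
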